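/- For all pairs of distinct words w, x over {0,1,2}, sep(τ_l(w), τ_l(x)) ≥ sep(w, x), where τ_l replaces each 1 by 11 and each 2 by 01. -/

import Mathlib

/-- `sep w x` : the minimum number of states of a DFA accepting `w` and rejecting `x`. -/
noncomputable def sep {α : Type} (w x : List α) : ℕ :=
  sInf {n | ∃ M : DFA α (Fin n), w ∈ M.accepts ∧ x ∉ M.accepts}

/-- `τ_l` : replaces `1` by `11` and `2` by `01` (fixing `0`). -/
def tl (w : List (Fin 3)) : List (Fin 2) :=
  w.flatMap fun c => if c = 0 then [0] else if c = 1 then [1, 1] else [0, 1]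

def code (c : Fin 3) : List (Fin 2) :=
  if c = 0 then [0] else if c = 1 then [1, 1] else [0, 1]

lemma tl_append (u v : List (Fin 3)) : tl (u ++ v) = tl u ++ tl v :=
  by simp [tl]

lemma tl_cons (c : Fin 3) (u : List (Fin 3)) : tl (c :: u) = code c ++ tl u := rfl

def dec : List (Fin 2) → List (Fin 3)
  | [] => []
  | a :: t =>
    if a = 0 then 0 :: dec t
    else match t with
      | [] => []
      | b :: t' => (if b = 1 then 1 else 2) :: dec t'

lemma dec_code (c : Fin 3) (r : List (Fin 2)) :
    dec ((code c).reverse ++ r) = c :: dec r := by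
  fin_cases c
  · show dec ((code 0).reverse ++ r) = 0 :: dec r
    rw [show code 0 = [0] from by decide]
    show dec (0 :: r) = _
    rw [dec.eq_def]; norm_num
  · show dec ((code 1).reverse ++ r) = 1 :: dec r
    rw [show code 1 = [1, 1] from by decide]
    show dec (1 :: 1 :: r) = _
    rw [dec.eq_def]; norm_num
  · show dec ((code 2).reverse ++ r) = 2 :: dec r
    rw [show code 2 = [0, 1] from by decide]
    show dec (1 :: 0 :: r) = _
    rw [dec.eq_def]; norm_num

lemma dec_tl (u : List (Fin 3)) : dec (tl u).reverse = u.reverse := by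
  induction u using List.reverseRecOn with
  | nil => simp [tl, dec]
  | append_singleton u c ih =>
    rw [tl_append]
    simp only [List.reverse_append]
    have : tl [c] = code c := by rw [tl_cons]; simp [tl]
    rw [this, dec_code, ih]
    simp

lemma tl_inj : Function.Injective tl := by
  intro u v h
  have := dec_tl u
  rw [h, dec_tl] at this
  exact (List.reverse_injective this).symm

def singDFA {α : Type} [DecidableEq α] (u : List α) : DFA α (Fin (u.length + 2)) where
  step s a := if h : ∃ hs : s.val < u.length, u.get ⟨s.val, hs⟩ = a
              then ⟨s.val + 1, by obtain ⟨hs, -⟩ := h; omega⟩ else ⟨u.length + 1, by omega⟩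
  start := ⟨0, by omega⟩
  accept := {⟨u.length, by omega⟩}

lemma singDFA_dead {α : Type} [DecidableEq α] (u : List α) (v : List α) :
    (singDFA u).evalFrom ⟨u.length + 1, by omega⟩ v = ⟨u.length + 1, by omega⟩ := by
  induction v with
  | nil => rfl
  | cons a t ih =>
    have hstep : (singDFA u).step ⟨u.length + 1, by omega⟩ a = ⟨u.length + 1, by omega⟩ := by
      simp only [singDFA]
      rw [dif_neg]
      rintro ⟨hs, -⟩
      omega
    show (singDFA u).evalFrom ((singDFA u).step _ a) t = _
    rw [hstep]; exact ih

lemma singDFA_run {α : Type} [DecidableEq α] (u : List α) :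
    ∀ m k (hk : k ≤ u.length), m = u.length - k →
      (singDFA u).evalFrom ⟨k, by omega⟩ (u.drop k) = ⟨u.length, by omega⟩ := by
  intro m
  induction m with
  | zero =>
    intro k hk hm
    have : k = u.length := by omega
    subst this
    simp [List.drop_length, DFA.evalFrom]
  | succ n ih =>
    intro k hk hm
    have hlt : k < u.length := by omega
    rw [List.drop_eq_getElem_cons hlt]
    show (singDFA u).evalFrom ((singDFA u).step ⟨k, by omega⟩ u[k]) (u.drop (k+1)) = _
    have hstep : (singDFA u).step ⟨k, by omega⟩ u[k] = ⟨k + 1, by omega⟩ := by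
      simp only [singDFA]
      rw [dif_pos ⟨hlt, rfl⟩]
    rw [hstep]
    exact ih (k + 1) (by omega) (by omega)

lemma singDFA_rej {α : Type} [DecidableEq α] (u : List α) :
    ∀ (v : List α) k (hk : k ≤ u.length),
      (singDFA u).evalFrom ⟨k, by omega⟩ v = ⟨u.length, by omega⟩ → v = u.drop k := by
  intro v
  induction v with
  | nil =>
    intro k hk h
    have : k = u.length := by simpa [DFA.evalFrom, Fin.ext_iff] using h
    subst this
    simp [List.drop_length]
  | cons a t ih =>
    intro k hk h
    have h' : (singDFA u).evalFrom ((singDFA u).step ⟨k, by omega⟩ a) t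
        = ⟨u.length, by omega⟩ := h
    by_cases hc : ∃ hs : k < u.length, u.get ⟨k, hs⟩ = a
    · obtain ⟨hs, hget⟩ := hc
      have hstep : (singDFA u).step ⟨k, by omega⟩ a = ⟨k + 1, by omega⟩ := by
        simp only [singDFA]
        rw [dif_pos ⟨hs, hget⟩]
      rw [hstep] at h'
      have ht := ih (k + 1) (by omega) h'
      rw [List.drop_eq_getElem_cons hs, ← hget, ht]
      rfl
    · have hstep : (singDFA u).step ⟨k, by omega⟩ a = ⟨u.length + 1, by omega⟩ := by
        simp only [singDFA]
        rw [dif_neg hc]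
      rw [hstep, singDFA_dead] at h'
      exact absurd h' (by simp [Fin.ext_iff])

lemma singDFA_sep {α : Type} [DecidableEq α] (u v : List α) (huv : v ≠ u) :
    u ∈ (singDFA u).accepts ∧ v ∉ (singDFA u).accepts := by
  constructor
  · rw [DFA.mem_accepts]
    show (singDFA u).evalFrom ⟨0, by omega⟩ u ∈ _
    have := singDFA_run u u.length 0 (by omega) (by omega)
    simp only [List.drop_zero] at this
    rw [this]
    rfl
  · rw [DFA.mem_accepts]
    intro h
    have h' : (singDFA u).evalFrom ⟨0, by omega⟩ v = ⟨u.length, by omega⟩ := h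
    have := singDFA_rej u v 0 (by omega) h'
    simp at this
    exact huv this

theorem stmt_17 (w x : List (Fin 3)) (hwx : w ≠ x) :
    sep w x ≤ sep (tl w) (tl x) := by
  set S : Set ℕ := {n | ∃ M : DFA (Fin 2) (Fin n), tl w ∈ M.accepts ∧ tl x ∉ M.accepts} with hS
  have hne : S.Nonempty := by
    refine ⟨(tl w).length + 2, singDFA (tl w), singDFA_sep _ _ ?_⟩
    exact fun h => hwx (tl_inj h).symm
  have hmem : sInf S ∈ S := Nat.sInf_mem hne
  obtain ⟨M, hw, hx⟩ := hmem
  set M' : DFA (Fin 3) (Fin (sInf S)) :=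
    { step := fun s c => M.evalFrom s (code c)
      start := M.start
      accept := M.accept } with hM'
  have key : ∀ (u : List (Fin 3)) (s : Fin (sInf S)),
      M'.evalFrom s u = M.evalFrom s (tl u) := by
    intro u
    induction u with
    | nil => intro s; rfl
    | cons c t ih =>
      intro s
      rw [tl_cons, DFA.evalFrom_of_append]
      exact ih (M.evalFrom s (code c))
  apply Nat.sInf_le
  refine ⟨M', ?_, ?_⟩
  · show w ∈ M'.accepts; rw [DFA.mem_accepts]
    show M'.evalFrom M'.start w ∈ M'.accept
    rw [key]
    exact hw
  · show x ∉ M'.accepts; rw [DFA.mem_accepts]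
    show M'.evalFrom M'.start x ∈ M'.accept → False
    rw [key]
    exact hx
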